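/- There exists no finite simple graph on a nonempty vertex set that is 6-regular and in which the subgraph induced by the open neighbourhood of every vertex has exactly 11 edges; that is, no (6,11)-constant graph exists. -/

import Mathlib

/-!
Let `G` be `r`-regular with `c` edges in every neighbourhood, and let `vx` be an edge with
`λ = |N(v) ∩ N(x)|`. Split the handshake sum of `G[N(v)]` into the part seen from the common
neighbours `Q = N(v) ∩ N(x)` and the edges inside `N(v) \ N(x)`, a set of `r - λ` vertices in
which `x` is isolated. Doing the same for `G[N(x)]` and adding, the contribution of each
`a ∈ Q` is twice its number of neighbours in `N(v) ∪ N(x)`, hence at most `2r`, so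
`2c ≤ rλ + (r - λ - 1)(r - λ - 2)`. For `(r, c) = (6, 11)` this forces `λ ≥ 4` on every
edge, while the handshake lemma in `G[N(v)]` gives `∑_{x ∈ N(v)} λ(vx) = 2c = 22 < 6 · 4`.
-/

/-- The number of edges of the subgraph of `G` induced by the open
neighbourhood of the vertex `v` (the quantity `e(v)`). -/
noncomputable def nbhdEdgeCount {V : Type*} (G : SimpleGraph V) (v : V) : ℕ :=
  Nat.card (SimpleGraph.induce (G.neighborSet v) G).edgeSet

open Finset

theorem Finset.card_inter_union {α : Type*} [DecidableEq α] (u s t : Finset α) :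
    #(u ∩ (s ∪ t)) = #(u ∩ s) + #(u ∩ (t \ s)) := by
  rw [← card_union_of_disjoint (disjoint_sdiff.mono inter_subset_right inter_subset_right),
    ← inter_union_distrib_left, union_sdiff_self_eq_union]

namespace SimpleGraph

variable {V : Type*} [DecidableEq V] {G : SimpleGraph V} [G.LocallyFinite]

theorem sum_card_neighborFinset_inter_comm (s t : Finset V) :
    ∑ y ∈ s, #(G.neighborFinset y ∩ t) = ∑ z ∈ t, #(G.neighborFinset z ∩ s) := by
  classical
  have key := sum_card_bipartiteAbove_eq_sum_card_bipartiteBelow (s := s) (t := t) G.Adj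
  simp only [bipartiteAbove, bipartiteBelow] at key
  convert key using 3 with y _ z _
  · ext; simp [and_comm]
  · ext; simp [and_comm, G.adj_comm]

theorem sum_card_neighborFinset_inter_split {s t : Finset V} (hts : t ⊆ s) :
    ∑ y ∈ s, #(G.neighborFinset y ∩ s) =
      ∑ y ∈ t, (#(G.neighborFinset y ∩ s) + #(G.neighborFinset y ∩ (s \ t))) +
        ∑ y ∈ s \ t, #(G.neighborFinset y ∩ (s \ t)) := by
  have hsplit (y : V) : #(G.neighborFinset y ∩ s) =
      #(G.neighborFinset y ∩ t) + #(G.neighborFinset y ∩ (s \ t)) := by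
    rw [← card_inter_union, union_eq_right.2 hts]
  have hcross := sum_card_neighborFinset_inter_comm (G := G) (s \ t) t
  rw [← sum_sdiff hts]
  simp only [hsplit, sum_add_distrib] at hcross ⊢
  omega

theorem sum_card_neighborFinset_inter_le_of_disjoint {s : Finset V} {x : V} (hx : x ∈ s)
    (hxs : Disjoint (G.neighborFinset x) s) :
    ∑ y ∈ s, #(G.neighborFinset y ∩ s) ≤ (#s - 1) * (#s - 2) := by
  rw [← add_sum_erase s _ hx, disjoint_iff_inter_eq_empty.1 hxs, card_empty, zero_add,
    ← card_erase_of_mem hx, ← smul_eq_mul]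
  refine sum_le_card_nsmul _ _ _ fun y hy => ?_
  have hsub : G.neighborFinset y ∩ s ⊆ (s.erase x).erase y := by
    intro z hz
    rw [mem_inter, mem_neighborFinset] at hz
    refine mem_erase.2 ⟨hz.1.ne', mem_erase.2 ⟨?_, hz.2⟩⟩
    rintro rfl
    exact Finset.disjoint_left.1 hxs ((G.mem_neighborFinset _ _).2 hz.1.symm)
      (mem_of_mem_erase hy)
  grw [card_le_card hsub, card_erase_of_mem hy, card_erase_of_mem hx]
  omega

theorem sum_card_neighborFinset_inter_neighborFinset (v : V) :
    ∑ x ∈ G.neighborFinset v, #(G.neighborFinset x ∩ G.neighborFinset v) =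
      2 * nbhdEdgeCount G v := by
  classical
  have hdeg (x : G.neighborSet v) : (G.induce (G.neighborSet v)).degree x =
      #(G.neighborFinset x ∩ G.neighborFinset v) := by
    rw [← card_neighborFinset_eq_degree, ← card_map (.subtype (· ∈ G.neighborSet v))]
    congr 1
    ext
    simp [and_comm]
  rw [nbhdEdgeCount, Nat.card_eq_fintype_card, ← edgeFinset_card,
    ← sum_degrees_eq_twice_card_edges]
  simp only [hdeg]
  rw [sum_subtype (G.neighborFinset v) (p := (· ∈ G.neighborSet v))
    (fun _ => mem_neighborFinset ..)]

theorem sum_card_neighborFinset_inter_neighborFinset_le_of_adj {v x : V} (hvx : G.Adj v x) :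
    ∑ y ∈ G.neighborFinset v, #(G.neighborFinset y ∩ G.neighborFinset v) ≤
      ∑ a ∈ G.neighborFinset v ∩ G.neighborFinset x,
          (#(G.neighborFinset a ∩ G.neighborFinset v) +
            #(G.neighborFinset a ∩ (G.neighborFinset v \ G.neighborFinset x))) +
        (#(G.neighborFinset v \ G.neighborFinset x) - 1) *
          (#(G.neighborFinset v \ G.neighborFinset x) - 2) := by
  rw [sum_card_neighborFinset_inter_split inter_subset_left, sdiff_inter_self_left]
  gcongr
  refine sum_card_neighborFinset_inter_le_of_disjoint (x := x) ?_ disjoint_sdiff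
  simp [hvx]

theorem IsRegularOfDegree.two_mul_nbhdEdgeCount_le {r : ℕ} (hr : G.IsRegularOfDegree r) {v x : V}
    (hvx : G.Adj v x) (hc : nbhdEdgeCount G x = nbhdEdgeCount G v) :
    2 * nbhdEdgeCount G v ≤ r * #(G.neighborFinset v ∩ G.neighborFinset x) +
      (r - #(G.neighborFinset v ∩ G.neighborFinset x) - 1) *
        (r - #(G.neighborFinset v ∩ G.neighborFinset x) - 2) := by
  have hv := sum_card_neighborFinset_inter_neighborFinset_le_of_adj hvx
  have hx := sum_card_neighborFinset_inter_neighborFinset_le_of_adj hvx.symm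
  rw [sum_card_neighborFinset_inter_neighborFinset] at hv hx
  rw [hc, inter_comm (G.neighborFinset x)] at hx
  have hcommon : ∀ a, (#(G.neighborFinset a ∩ G.neighborFinset v) +
        #(G.neighborFinset a ∩ (G.neighborFinset v \ G.neighborFinset x))) +
      (#(G.neighborFinset a ∩ G.neighborFinset x) +
        #(G.neighborFinset a ∩ (G.neighborFinset x \ G.neighborFinset v))) ≤ 2 * r := by
    intro a
    have hunion_v :=
      card_inter_union (G.neighborFinset a) (G.neighborFinset v) (G.neighborFinset x)
    have hunion_x :=
      card_inter_union (G.neighborFinset a) (G.neighborFinset x) (G.neighborFinset v)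
    have hdeg : #(G.neighborFinset a ∩ (G.neighborFinset v ∪ G.neighborFinset x)) ≤ r :=
      (card_le_card inter_subset_left).trans (hr.degree_eq a).le
    rw [union_comm] at hunion_x
    omega
  have hsum :=
    sum_le_card_nsmul (G.neighborFinset v ∩ G.neighborFinset x) _ _ fun a _ => hcommon a
  rw [sum_add_distrib, smul_eq_mul] at hsum
  rw [card_sdiff, inter_comm (G.neighborFinset x), card_neighborFinset_eq_degree,
    hr.degree_eq] at hv
  rw [card_sdiff, card_neighborFinset_eq_degree, hr.degree_eq] at hx
  linarith

theorem IsRegularOfDegree.four_le_card_inter_of_adj (hr : G.IsRegularOfDegree 6)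
    (hc : ∀ v, nbhdEdgeCount G v = 11) {v x : V} (hvx : G.Adj v x) :
    4 ≤ #(G.neighborFinset v ∩ G.neighborFinset x) := by
  have hbound := hr.two_mul_nbhdEdgeCount_le hvx ((hc x).trans (hc v).symm)
  have hle : #(G.neighborFinset v ∩ G.neighborFinset x) ≤ 5 := by
    have hsub : G.neighborFinset v ∩ G.neighborFinset x ⊆ (G.neighborFinset v).erase x :=
      fun y hy => mem_erase.2 ⟨by rintro rfl; simp at hy, (mem_inter.1 hy).1⟩
    grw [card_le_card hsub, card_erase_of_mem (by simpa using hvx), card_neighborFinset_eq_degree,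
      hr.degree_eq]
  rw [hc] at hbound
  interval_cases #(G.neighborFinset v ∩ G.neighborFinset x) <;> omega

end SimpleGraph

open SimpleGraph in
/-- No (6,11)-constant graph exists: there is no finite simple graph on a
nonempty vertex set that is 6-regular and in which the subgraph induced by
the open neighbourhood of every vertex has exactly 11 edges. -/
theorem no_six_eleven_constant_graph :
    ¬ ∃ (V : Type) (_ : Fintype V) (_ : Nonempty V) (G : SimpleGraph V),
      (∀ v : V, Nat.card (G.neighborSet v) = 6) ∧
      (∀ v : V, nbhdEdgeCount G v = 11) := by
  rintro ⟨V, _, ⟨v⟩, G, hdeg, hc⟩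
  classical
  have hr : G.IsRegularOfDegree 6 := fun w => by
    rw [← card_neighborSet_eq_degree, ← Nat.card_eq_fintype_card, hdeg]
  have hsum : #(G.neighborFinset v) • 4 ≤
      ∑ x ∈ G.neighborFinset v, #(G.neighborFinset x ∩ G.neighborFinset v) :=
    card_nsmul_le_sum _ _ _ fun x hx => by
      rw [inter_comm]
      exact hr.four_le_card_inter_of_adj hc ((mem_neighborFinset ..).1 hx)
  rw [sum_card_neighborFinset_inter_neighborFinset, hc, card_neighborFinset_eq_degree,
    hr.degree_eq, smul_eq_mul] at hsum
  omega
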